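/- The automorphism group of the Petersen graph is isomorphic to S_5, and in particular has order 120. -/

import Mathlib

/-- The automorphism group of a simple graph `G`, realized as the subgroup of
permutations of the vertex set that preserve adjacency. -/
def graphAut {V : Type*} (G : SimpleGraph V) : Subgroup (Equiv.Perm V) where
  carrier := {f | ∀ x y : V, G.Adj (f x) (f y) ↔ G.Adj x y}
  one_mem' := by intro x y; rfl
  mul_mem' := by
    intro f g hf hg x y
    simpa [Equiv.Perm.mul_apply] using (hf (g x) (g y)).trans (hg x y)
  inv_mem' := by
    intro f hf x y
    simpa using (hf (f⁻¹ x) (f⁻¹ y)).symm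

/-- The Petersen graph, realized as the Kneser graph `K(5,2)`: vertices are the
2-element subsets of a 5-element set, adjacent when disjoint. -/
def petersenGraph : SimpleGraph {s : Finset (Fin 5) // s.card = 2} where
  Adj a b := Disjoint a.1 b.1
  symm := ⟨by intro a b h; exact h.symm⟩
  loopless := ⟨by
    intro a h
    have h2 : a.1 = ∅ := by simpa using h
    have := a.2
    simp [h2] at this⟩

/-!
A permutation of the points acts on 2-subsets preserving disjointness, which gives an injective
homomorphism `Perm α → Aut K(α, 2)`. Conversely, let `F` be an automorphism and `a` a point. The
`|α| - 1 ≥ 4` pairs through `a` pairwise meet, so their images are at least four pairwise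
intersecting 2-sets; these have a common point `g a`, because pairwise intersecting 2-sets without
a common point all lie inside a triangle `{a, b, c}`, which has only three 2-subsets. The map `g`
is injective, since for distinct `a, b, c, d` the pairs `{a, c}` and `{b, d}` are disjoint while
their images would share `g a = g b`; finally `F {a, b} ∋ g a, g b` forces `F {a, b} = {g a, g b}`.
-/

open Equiv Finset

theorem Set.Intersecting.exists_forall_mem_of_card_two {α : Type*} [DecidableEq α]
    {𝒜 : Finset (Finset α)}
    (h𝒜 : (𝒜 : Set (Finset α)).Intersecting) (h₂ : ∀ s ∈ 𝒜, s.card = 2) (h₃ : 3 < 𝒜.card) :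
    ∃ a, ∀ s ∈ 𝒜, a ∈ s := by
  by_contra! hmiss
  obtain ⟨s, hs⟩ := (card_pos (s := 𝒜)).1 (by omega)
  obtain ⟨a, b, hab, rfl⟩ := card_eq_two.1 (h₂ s hs)
  obtain ⟨t, ht, hat⟩ := hmiss a
  obtain ⟨u, hu, hbu⟩ := hmiss b
  obtain ⟨c, hct, hcu⟩ := Finset.not_disjoint_iff.1 (h𝒜 ht hu)
  -- `{a, b}`, `t ∌ a`, `u ∌ b` pairwise meet, so `t = {b, c}` and `u = {a, c}`, and a 2-set meeting
  -- all three sides of this triangle lies inside it.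
  have hsub : 𝒜 ⊆ Finset.powersetCard 2 {a, b, c} := by
    intro v hv
    rw [mem_powersetCard]
    refine ⟨?_, h₂ v hv⟩
    have hvs := h𝒜 hv hs
    have hvt := h𝒜 hv ht
    have hvu := h𝒜 hv hu
    have hst := h𝒜 hs ht
    have hsu := h𝒜 hs hu
    obtain ⟨x, y, hxy, rfl⟩ := card_eq_two.1 (h₂ v hv)
    obtain ⟨t₁, t₂, ht₁₂, rfl⟩ := card_eq_two.1 (h₂ t ht)
    obtain ⟨u₁, u₂, hu₁₂, rfl⟩ := card_eq_two.1 (h₂ u hu)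
    simp only [Finset.disjoint_insert_left, Finset.disjoint_singleton_left, Finset.mem_insert,
      Finset.mem_singleton] at hvs hvt hvu hst hsu hat hbu hct hcu
    intro z hz
    simp only [Finset.mem_insert, Finset.mem_singleton] at hz ⊢
    grind
  have : #𝒜 ≤ 3 := calc
    #𝒜 ≤ #(Finset.powersetCard 2 {a, b, c}) := Finset.card_le_card hsub
    _ = Nat.choose #{a, b, c} 2 := Finset.card_powersetCard _ _
    _ ≤ Nat.choose 3 2 := Nat.choose_le_choose 2 Finset.card_le_three
    _ = 3 := rfl
  omega

lemma Finset.exists_ne_notMem_of_card_add_two_le {α : Type*} [Fintype α] [DecidableEq α]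
    (s : Finset α) (h : #s + 2 ≤ Fintype.card α) : ∃ c ∉ s, ∃ d ∉ s, c ≠ d := by
  obtain ⟨c, hc, d, hd, hcd⟩ := one_lt_card.1 (by rw [card_compl]; omega : 1 < #sᶜ)
  exact ⟨c, mem_compl.1 hc, d, mem_compl.1 hd, hcd⟩

def kneserGraph (α : Type*) (n : ℕ) [NeZero n] : SimpleGraph {s : Finset α // s.card = n} where
  Adj s t := Disjoint s.1 t.1
  symm := ⟨fun _ _ h => h.symm⟩
  loopless := ⟨fun s h => NeZero.ne n (by simpa [disjoint_self.1 h] using s.2.symm)⟩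

namespace kneserGraph

section

variable {α : Type*} {n : ℕ} [NeZero n]

def permAut : Perm α →* graphAut (kneserGraph α n) where
  toFun σ := ⟨σ.finsetCongr.subtypeEquiv fun s => by simp, fun s t =>
    disjoint_map σ.toEmbedding⟩
  map_one' := by ext : 4; simp [Perm.one_def]
  map_mul' σ τ := by ext : 4; simp [Perm.mul_def]

@[simp]
lemma coe_permAut_apply (σ : Perm α) (s : {s : Finset α // s.card = n}) :
    ((permAut σ : graphAut (kneserGraph α n)).1 s).1 = s.1.map σ.toEmbedding := rfl

end

variable {α : Type*} [Fintype α] [DecidableEq α]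

lemma permAut_injective (hα : 3 ≤ Fintype.card α) :
    Function.Injective (permAut : Perm α →* graphAut (kneserGraph α 2)) := by
  refine (injective_iff_map_eq_one _).2 fun σ hσ => Equiv.ext fun a => ?_
  have hfix (s : Finset α) (hs : s.card = 2) : s.map σ.toEmbedding = s := by
    simpa using congrArg (fun F : graphAut (kneserGraph α 2) => (F.1 ⟨s, hs⟩).1) hσ
  obtain ⟨b, hb, c, hc, hbc⟩ := exists_ne_notMem_of_card_add_two_le {a} (by simpa using hα)
  have hσab := mem_map_of_mem σ.toEmbedding (mem_insert_self a {b})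
  have hσac := mem_map_of_mem σ.toEmbedding (mem_insert_self a {c})
  rw [hfix _ (card_pair (by simpa [eq_comm] using hb))] at hσab
  rw [hfix _ (card_pair (by simpa [eq_comm] using hc))] at hσac
  simp only [mem_insert, mem_singleton, coe_toEmbedding] at hσab hσac
  simp only [Perm.coe_one, id_eq]
  grind

lemma card_filter_mem (a : α) :
    #{s : {s : Finset α // s.card = 2} | a ∈ s.1} = Fintype.card α - 1 := by
  rw [← card_univ, ← card_erase_of_mem (mem_univ a)]
  symm
  refine card_bij (fun b hb => ⟨{a, b}, card_pair (ne_of_mem_erase hb).symm⟩) ?_ ?_ ?_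
  · simp
  · intro b hb c hc h
    have : b ∈ ({a, c} : Finset α) := by simpa [Subtype.ext_iff] using congrArg (b ∈ ·.1) h
    simpa [ne_of_mem_erase hb] using this
  · intro s hs
    have ha : a ∈ s.1 := by simpa using hs
    obtain ⟨b, hb⟩ := card_eq_one.1 (by rw [card_erase_of_mem ha, s.2] : #(s.1.erase a) = 1)
    have hbs : b ∈ s.1.erase a := hb ▸ mem_singleton_self b
    refine ⟨b, mem_erase.2 ⟨ne_of_mem_erase hbs, mem_univ b⟩, Subtype.ext ?_⟩
    change insert a {b} = s.1
    rw [← hb, insert_erase ha]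

variable {F : Perm {s : Finset α // s.card = 2}}

lemma exists_mem_apply_of_mem (hα : 5 ≤ Fintype.card α) (hF : F ∈ graphAut (kneserGraph α 2)) :
    ∃ g : α → α, ∀ s a, a ∈ s.1 → g a ∈ (F s).1 := by
  suffices ∀ a, ∃ p, ∀ s : {s : Finset α // s.card = 2}, a ∈ s.1 → p ∈ (F s).1 by
    choose g hg using this
    exact ⟨g, fun s a => hg a s⟩
  intro a
  let 𝒜 := ({s | a ∈ s.1} : Finset {s : Finset α // s.card = 2}).image fun s => (F s).1
  have h𝒜 : (𝒜 : Set (Finset α)).Intersecting := by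
    rw [coe_image]
    rintro _ ⟨s, hs, rfl⟩ _ ⟨t, ht, rfl⟩ hFst
    exact Finset.not_disjoint_iff.2 ⟨a, (mem_filter.1 hs).2, (mem_filter.1 ht).2⟩
      ((hF s t).1 hFst)
  have h𝒜₂ : ∀ s ∈ 𝒜, s.card = 2 := forall_mem_image.2 fun s _ => (F s).2
  have h𝒜₃ : 3 < #𝒜 := by
    have hinj : Function.Injective fun s => (F s).1 := Subtype.val_injective.comp F.injective
    rw [show #𝒜 = _ from card_image_of_injective _ hinj, card_filter_mem]
    omega
  obtain ⟨p, hp⟩ := h𝒜.exists_forall_mem_of_card_two h𝒜₂ h𝒜₃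
  exact ⟨p, fun s hs => hp _ (mem_image_of_mem _ (mem_filter.2 ⟨mem_univ s, hs⟩))⟩

lemma injective_of_mem_apply_of_mem (hα : 4 ≤ Fintype.card α)
    (hF : F ∈ graphAut (kneserGraph α 2)) {g : α → α} (hg : ∀ s a, a ∈ s.1 → g a ∈ (F s).1) :
    Function.Injective g := by
  intro a b hab
  by_contra hne
  obtain ⟨c, hc, d, hd, hcd⟩ := exists_ne_notMem_of_card_add_two_le {a, b}
    (by rw [card_pair hne]; omega)
  simp only [mem_insert, mem_singleton, not_or] at hc hd
  let s : {s : Finset α // s.card = 2} := ⟨{a, c}, card_pair (Ne.symm hc.1)⟩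
  let t : {s : Finset α // s.card = 2} := ⟨{b, d}, card_pair (Ne.symm hd.2)⟩
  have hst : Disjoint s.1 t.1 := by
    simp only [s, t, disjoint_insert_left, disjoint_singleton_left, mem_insert, mem_singleton]
    grind
  have hFst : Disjoint (F s).1 (F t).1 := (hF s t).2 hst
  exact Finset.disjoint_left.1 hFst (hg s a (by simp [s])) (hab ▸ hg t b (by simp [t]))

lemma permAut_surjective (hα : 5 ≤ Fintype.card α) :
    Function.Surjective (permAut : Perm α →* graphAut (kneserGraph α 2)) := by
  rintro ⟨F, hF⟩
  obtain ⟨g, hg⟩ := exists_mem_apply_of_mem hα hF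
  have hg_inj := injective_of_mem_apply_of_mem (by omega) hF hg
  refine ⟨Equiv.ofBijective g (Finite.injective_iff_bijective.1 hg_inj), ?_⟩
  ext s : 3
  refine eq_of_subset_of_card_le ?_ (by simp [s.2, (F s).2])
  intro x hx
  obtain ⟨a, ha, rfl⟩ := mem_map.1 hx
  exact hg s a ha

noncomputable def autEquivPerm (hα : 5 ≤ Fintype.card α) : graphAut (kneserGraph α 2) ≃* Perm α :=
  (MulEquiv.ofBijective permAut ⟨permAut_injective (by omega), permAut_surjective hα⟩).symm

end kneserGraph

lemma petersenGraph_eq_kneserGraph : petersenGraph = kneserGraph (Fin 5) 2 := by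
  ext; rfl

/-- The automorphism group of the Petersen graph is isomorphic to `S_5`; in
particular it has order `120`. -/
theorem aut_petersen :
    Nonempty ((graphAut petersenGraph) ≃* Equiv.Perm (Fin 5)) ∧
    Nat.card (graphAut petersenGraph) = 120 := by
  rw [petersenGraph_eq_kneserGraph]
  have e := kneserGraph.autEquivPerm (α := Fin 5) (by simp)
  refine ⟨⟨e⟩, ?_⟩
  rw [Nat.card_congr e.toEquiv, Nat.card_perm, Nat.card_fin]
  rfl
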